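/- Let T be an invertible measure-preserving transformation of (E,ℰ,μ), let U = U_{T⁻¹} be the Koopman unitary (Uh = h∘T⁻¹), and let V be a unitary operator on L²(μ). Then V* M_f V = M_{f∘T} for all f ∈ L^∞(μ) if and only if there exists g ∈ L^∞(μ) with V = M_g U. Moreover, in that case |g| = 1 μ-almost everywhere. -/

import Mathlib

/-! Conjugating `M_f` by `V` gives `M_{f ∘ T}`, and conjugating it by the Koopman operator `U`
does too, so `W = V U⁻¹` commutes with every multiplication operator `M_f`, `f ∈ L^∞`.
Such an operator is itself a multiplication operator: pick `ρ > 0` in `L²` (σ-finiteness) and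
put `g = W ρ / ρ`; on the sets where `|k| ≤ n` and `ρ ≥ 1/n` the function `k` is a bounded
multiple of `ρ`, which forces `W k = g k` there, and these sets exhaust the space. Finally
`M_g = W` is an isometry, so `∫_A |g|² = μ A` for every `A` of finite measure, i.e. `|g| = 1`
a.e.; conversely `|g| = 1` lets one cancel `g` and read the relation `V* M_f V = M_{f ∘ T}`
back off `V = M_g U`. -/

open MeasureTheory Filter
open scoped ENNReal

theorem MeasureTheory.MeasurePreserving.ae_eq_comp_iff {α β δ : Type*} [MeasurableSpace α]
    [MeasurableSpace β] {μa : Measure α} {μb : Measure β} {T : α ≃ᵐ β}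
    (hT : MeasurePreserving T μa μb) {F G : β → δ} :
    F ∘ T =ᵐ[μa] G ∘ T ↔ F =ᵐ[μb] G := by
  refine ⟨fun h => ?_, hT.quasiMeasurePreserving.ae_eq_comp⟩
  simpa [Function.comp_def] using (hT.symm T).quasiMeasurePreserving.ae_eq_comp h

section

variable {E 𝕜 : Type*} [MeasurableSpace E] {μ : Measure E} [RCLike 𝕜] {p : ℝ≥0∞}

theorem koopman_ae_eq_mul_iff {T : E ≃ᵐ E} (hT : MeasurePreserving T μ μ)
    {U : Lp 𝕜 p μ → Lp 𝕜 p μ} (hU : ∀ h, (U h : E → 𝕜) =ᵐ[μ] fun x => h (T.symm x))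
    (f : E → 𝕜) (h h' : Lp 𝕜 p μ) :
    ((U h' : E → 𝕜) =ᵐ[μ] fun x => f x * U h x) ↔ (h' : E → 𝕜) =ᵐ[μ] fun x => f (T x) * h x := by
  have hUh : (fun x => f x * U h x) =ᵐ[μ] fun x => f x * h (T.symm x) := by
    filter_upwards [hU h] with x hx
    rw [hx]
  rw [(hU h').congr_left, hUh.congr_right, ← hT.ae_eq_comp_iff]
  simp [Function.comp_def]

theorem exists_pos_memLp (μ : Measure E) [SigmaFinite μ] (hp : p ≠ ∞) :
    ∃ ρ : E → ℝ, Measurable ρ ∧ (∀ x, 0 < ρ x) ∧ MemLp ρ p μ := by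
  rcases eq_or_ne p 0 with rfl | hp0
  · exact ⟨1, measurable_const, fun _ => one_pos,
      memLp_zero_iff_aestronglyMeasurable.2 aestronglyMeasurable_const⟩
  obtain ⟨g, hg_pos, hg_meas, hg_int⟩ := exists_pos_lintegral_lt_of_sigmaFinite μ one_ne_zero
  have hρ_meas : Measurable fun x => (g x : ℝ) ^ p.toReal⁻¹ :=
    hg_meas.coe_nnreal_real.pow_const _
  refine ⟨_, hρ_meas, fun x => by have := hg_pos x; positivity, ?_⟩
  rw [← memLp_norm_rpow_iff hρ_meas.aestronglyMeasurable hp0 hp, ENNReal.div_self hp0 hp,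
    memLp_one_iff_integrable]
  have hg : ∀ x, ‖(g x : ℝ) ^ p.toReal⁻¹‖ ^ p.toReal = g x := fun x => by
    rw [Real.norm_of_nonneg (by positivity),
      Real.rpow_inv_rpow (g x).coe_nonneg (ENNReal.toReal_ne_zero.2 ⟨hp0, hp⟩)]
  simp only [hg]
  exact ⟨hg_meas.coe_nnreal_real.aestronglyMeasurable,
    hasFiniteIntegral_iff_ofNNReal.2 (hg_int.trans ENNReal.one_lt_top)⟩

/-- `W` lies in the commutant of the multiplication operators `M_f`, `f ∈ L^∞(μ)`;
`k' = M_f k` is expressed through representatives. -/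
def CommutesWithBoundedMul (W : Lp 𝕜 p μ → Lp 𝕜 p μ) : Prop :=
  ∀ f : E → 𝕜, Measurable f → (∃ C, ∀ x, ‖f x‖ ≤ C) →
    ∀ k k' : Lp 𝕜 p μ, (k' =ᵐ[μ] fun x => f x * k x) → W k' =ᵐ[μ] fun x => f x * W k x

theorem CommutesWithBoundedMul.ae_eq_mul_on {W : Lp 𝕜 p μ → Lp 𝕜 p μ}
    (hW : CommutesWithBoundedMul W) {B : Set E} (hB : MeasurableSet B) {φ : E → 𝕜}
    (hφ : Measurable φ) {C : ℝ} (hφC : ∀ x ∈ B, ‖φ x‖ ≤ C) {k w : Lp 𝕜 p μ}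
    (hkw : ∀ᵐ x ∂μ, x ∈ B → k x = φ x * w x) :
    ∀ᵐ x ∂μ, x ∈ B → W k x = φ x * W w x := by
  set kB : Lp 𝕜 p μ := ((Lp.memLp k).indicator hB).toLp _
  have hkB : (kB : E → 𝕜) =ᵐ[μ] B.indicator k := MemLp.coeFn_toLp _
  have h_one := hW (B.indicator 1) (measurable_const.indicator hB)
    ⟨1, fun x => by by_cases hx : x ∈ B <;> simp [hx]⟩ k kB <| by
      filter_upwards [hkB] with x hx
      by_cases hxB : x ∈ B <;> simp [hx, hxB]
  have h_φ := hW (B.indicator φ) (hφ.indicator hB)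
    ⟨max C 0, fun x => by
      by_cases hx : x ∈ B
      · rw [Set.indicator_of_mem hx]
        exact le_max_of_le_left (hφC x hx)
      · simp [hx]⟩ w kB <| by
      filter_upwards [hkB, hkw] with x hx hxw
      by_cases hxB : x ∈ B <;> simp [hx, hxB, hxw]
  filter_upwards [h_one, h_φ] with x h_one h_φ hx
  simp only [Set.indicator_of_mem hx, Pi.one_apply, one_mul] at h_one h_φ
  rw [← h_one, h_φ]

theorem CommutesWithBoundedMul.exists_ae_eq_mul [SigmaFinite μ] (hp : p ≠ ∞)
    {W : Lp 𝕜 p μ → Lp 𝕜 p μ} (hW : CommutesWithBoundedMul W) :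
    ∃ g : E → 𝕜, Measurable g ∧ ∀ k, (W k : E → 𝕜) =ᵐ[μ] fun x => g x * k x := by
  obtain ⟨ρ, hρ_meas, hρ_pos, hρ_mem⟩ := exists_pos_memLp μ hp
  set w : Lp 𝕜 p μ := (hρ_mem.ofReal (K := 𝕜)).toLp _
  have hw : (w : E → 𝕜) =ᵐ[μ] fun x => (ρ x : 𝕜) := MemLp.coeFn_toLp _
  have hρ_ne : ∀ x, (ρ x : 𝕜) ≠ 0 := fun x => RCLike.ofReal_ne_zero.2 (hρ_pos x).ne'
  have hρ_inv_meas : Measurable fun x => (ρ x : 𝕜)⁻¹ :=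
    (RCLike.measurable_ofReal.comp hρ_meas).inv
  refine ⟨fun x => (ρ x : 𝕜)⁻¹ * W w x, hρ_inv_meas.mul (Lp.stronglyMeasurable _).measurable,
    fun k => ?_⟩
  set B : ℕ → Set E := fun n => {x | ‖k x‖ ≤ n ∧ 1 ≤ n * ρ x}
  have hB_meas : ∀ n, MeasurableSet (B n) := fun n =>
    (measurableSet_le (Lp.stronglyMeasurable k).measurable.norm measurable_const).inter
      (measurableSet_le measurable_const (measurable_const.mul hρ_meas))
  have hB_cover : ∀ x, ∃ n, x ∈ B n := fun x => by
    obtain ⟨n, hn⟩ := exists_nat_ge (max ‖k x‖ (ρ x)⁻¹)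
    refine ⟨n, (le_max_left _ _).trans hn, ?_⟩
    calc 1 = (ρ x)⁻¹ * ρ x := (inv_mul_cancel₀ (hρ_pos x).ne').symm
      _ ≤ n * ρ x := by gcongr; exacts [(hρ_pos x).le, (le_max_right _ _).trans hn]
  have hk_quot_le : ∀ n, ∀ x ∈ B n, ‖(ρ x : 𝕜)⁻¹ * k x‖ ≤ n ^ 2 := by
    rintro n x ⟨hk, hρ⟩
    rw [norm_mul, norm_inv, RCLike.norm_ofReal, abs_of_pos (hρ_pos x), inv_mul_le_iff₀ (hρ_pos x)]
    nlinarith [norm_nonneg (k x), hρ_pos x]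
  have hW_on_B : ∀ n, ∀ᵐ x ∂μ, x ∈ B n → W k x = (ρ x : 𝕜)⁻¹ * k x * W w x := fun n =>
    hW.ae_eq_mul_on (hB_meas n) (φ := fun x => (ρ x : 𝕜)⁻¹ * k x)
      (hρ_inv_meas.mul (Lp.stronglyMeasurable k).measurable)
      (hk_quot_le n) <| by
        filter_upwards [hw] with x hwx _
        rw [hwx, mul_right_comm, inv_mul_cancel₀ (hρ_ne x), one_mul]
  filter_upwards [ae_all_iff.2 hW_on_B] with x hx
  obtain ⟨n, hn⟩ := hB_cover x
  rw [hx n hn]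
  ring

theorem ae_norm_eq_one_of_eLpNorm_mul_eq [SigmaFinite μ] (hp0 : p ≠ 0) (hp : p ≠ ∞)
    {g : E → 𝕜} (hg : Measurable g)
    (hnorm : ∀ k : Lp 𝕜 p μ, eLpNorm (fun x => g x * k x) p μ = eLpNorm k p μ) :
    ∀ᵐ x ∂μ, ‖g x‖ = 1 := by
  have hp_pos : 0 < p.toReal := ENNReal.toReal_pos hp0 hp
  have h_setLIntegral : ∀ A, MeasurableSet A → μ A < ∞ →
      ∫⁻ x in A, ‖g x‖ₑ ^ p.toReal ∂μ = ∫⁻ x in A, 1 ∂μ := by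
    intro A hA hμA
    set χ : Lp 𝕜 p μ := indicatorConstLp p hA hμA.ne 1
    have hχ : (χ : E → 𝕜) =ᵐ[μ] A.indicator fun _ => 1 := indicatorConstLp_coeFn
    have h := hnorm χ
    have hgA : (fun x => g x * χ x) =ᵐ[μ] A.indicator g := by
      filter_upwards [hχ] with x hx
      by_cases hxA : x ∈ A <;> simp [hx, hxA]
    rw [eLpNorm_congr_ae hgA, eLpNorm_congr_ae hχ,
      eLpNorm_indicator_const hA hp0 hp, eLpNorm_indicator_eq_eLpNorm_restrict hA,
      eLpNorm_eq_lintegral_rpow_enorm_toReal hp0 hp, enorm_one, one_mul] at h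
    rw [ENNReal.rpow_left_injective (one_div_pos.2 hp_pos).ne' h, setLIntegral_one]
  have h_ae : (fun x => ‖g x‖ₑ ^ p.toReal) =ᵐ[μ] fun _ => 1 :=
    ae_eq_of_forall_setLIntegral_eq_of_sigmaFinite (hg.enorm.pow_const _) measurable_const
      h_setLIntegral
  filter_upwards [h_ae] with x hx
  have h1 : ‖g x‖ₑ = ‖(1 : 𝕜)‖ₑ := by
    rw [enorm_one]
    exact ENNReal.rpow_left_injective hp_pos.ne' (hx.trans (ENNReal.one_rpow _).symm)
  simpa using enorm_eq_iff_norm_eq.1 h1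

theorem LinearIsometry.ae_norm_eq_one_of_ae_eq_mul [Fact (1 ≤ p)] [SigmaFinite μ] (hp : p ≠ ∞)
    (W : Lp 𝕜 p μ →ₗᵢ[𝕜] Lp 𝕜 p μ) {g : E → 𝕜} (hg : Measurable g)
    (hWg : ∀ k, (W k : E → 𝕜) =ᵐ[μ] fun x => g x * k x) :
    ∀ᵐ x ∂μ, ‖g x‖ = 1 :=
  ae_norm_eq_one_of_eLpNorm_mul_eq (zero_lt_one.trans_le Fact.out).ne' hp hg fun k => by
    rw [← eLpNorm_congr_ae (hWg k), ← Lp.enorm_def, ← Lp.enorm_def,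
      enorm_eq_iff_norm_eq.2 (W.norm_map k)]

theorem exists_bounded_measurable_ae_eq {F : Type*} [NormedAddCommGroup F] [MeasurableSpace F]
    [BorelSpace F] {g : E → F} (hg : Measurable g) {C : ℝ} (hC : ∀ᵐ x ∂μ, ‖g x‖ ≤ C) :
    ∃ g' : E → F, Measurable g' ∧ (∃ C', ∀ x, ‖g' x‖ ≤ C') ∧ g' =ᵐ[μ] g := by
  have hS : MeasurableSet {x | ‖g x‖ ≤ C} := measurableSet_le hg.norm measurable_const
  refine ⟨{x | ‖g x‖ ≤ C}.indicator g, hg.indicator hS, ⟨max C 0, fun x => ?_⟩, ?_⟩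
  · by_cases hx : ‖g x‖ ≤ C
    · rw [Set.indicator_of_mem (show x ∈ {x | ‖g x‖ ≤ C} from hx)]
      exact le_max_of_le_left hx
    · simp [Set.indicator_of_notMem (show x ∉ {x | ‖g x‖ ≤ C} from hx)]
  · filter_upwards [hC] with x hx
    exact Set.indicator_of_mem (s := {x | ‖g x‖ ≤ C}) hx g

theorem commutesWithBoundedMul_of_symm_ae_eq [Fact (1 ≤ p)] {T : E ≃ᵐ E}
    (hT : MeasurePreserving T μ μ) {U V : Lp 𝕜 p μ ≃ₗᵢ[𝕜] Lp 𝕜 p μ}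
    (hU : ∀ h : Lp 𝕜 p μ, (U h : E → 𝕜) =ᵐ[μ] fun x => h (T.symm x))
    (hV : ∀ f : E → 𝕜, Measurable f → (∃ C, ∀ x, ‖f x‖ ≤ C) →
      ∀ h k : Lp 𝕜 p μ, ((k : E → 𝕜) =ᵐ[μ] fun x => f x * V h x) →
        (V.symm k : E → 𝕜) =ᵐ[μ] fun x => f (T x) * h x) :
    CommutesWithBoundedMul fun k => V (U.symm k) := by
  rintro f hf ⟨C, hC⟩ k k' hk'
  have hU_symm : (U.symm k' : E → 𝕜) =ᵐ[μ] fun x => f (T x) * U.symm k x :=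
    (koopman_ae_eq_mul_iff hT hU f _ _).1 (by simpa using hk')
  have hfV : MemLp (fun x => f x * V (U.symm k) x) p μ :=
    (Lp.memLp _).mul (memLp_top_of_bound hf.aestronglyMeasurable C (.of_forall hC))
  have hV_symm : V.symm (hfV.toLp _) = U.symm k' :=
    Lp.ext ((hV f hf ⟨C, hC⟩ _ _ hfV.coeFn_toLp).trans hU_symm.symm)
  dsimp only
  rw [← hV_symm, V.apply_symm_apply]
  exact hfV.coeFn_toLp

theorem symm_ae_eq_comp_mul_of_ae_eq_mul [Fact (1 ≤ p)] {T : E ≃ᵐ E}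
    (hT : MeasurePreserving T μ μ) {U : Lp 𝕜 p μ → Lp 𝕜 p μ}
    (hU : ∀ h : Lp 𝕜 p μ, (U h : E → 𝕜) =ᵐ[μ] fun x => h (T.symm x))
    {V : Lp 𝕜 p μ ≃ₗᵢ[𝕜] Lp 𝕜 p μ} {g : E → 𝕜} (hg : ∀ᵐ x ∂μ, g x ≠ 0)
    (hVg : ∀ h, (V h : E → 𝕜) =ᵐ[μ] fun x => g x * U h x) (f : E → 𝕜) (h k : Lp 𝕜 p μ)
    (hk : (k : E → 𝕜) =ᵐ[μ] fun x => f x * V h x) :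
    (V.symm k : E → 𝕜) =ᵐ[μ] fun x => f (T x) * h x := by
  refine (koopman_ae_eq_mul_iff hT hU f h _).1 ?_
  have hk_g := hVg (V.symm k)
  rw [V.apply_symm_apply] at hk_g
  filter_upwards [hg, hk, hk_g, hVg h] with x hgx hkx hk_gx hVhx
  apply mul_left_cancel₀ hgx
  rw [← hk_gx, hkx, hVhx]
  ring

end

/-- Let `T` be an invertible measure-preserving transformation, `U = U_{T⁻¹}`
the Koopman unitary (`U h = h ∘ T⁻¹`) and `V` a unitary on `L²(μ)`. Then
`V* M_f V = M_{f∘T}` for all `f ∈ L^∞(μ)` iff `V = M_g U` for some `g ∈ L^∞(μ)`;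
moreover any such `g` has `|g| = 1` μ-a.e. The relation `V* M_f V = M_{f∘T}` is encoded by:
whenever `k` represents `M_f (V h)`, then `V⁻¹ k = V* k` represents `M_{f∘T} h`. -/
theorem stmt_2 {E : Type*} [MeasurableSpace E] (μ : Measure E) [SigmaFinite μ]
    (T : E ≃ᵐ E) (hT : MeasurePreserving T μ μ)
    (U : Lp ℂ 2 μ ≃ₗᵢ[ℂ] Lp ℂ 2 μ)
    (hU : ∀ h : Lp ℂ 2 μ, (U h : E → ℂ) =ᵐ[μ] fun x => h (T.symm x))
    (V : Lp ℂ 2 μ ≃ₗᵢ[ℂ] Lp ℂ 2 μ) :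
    ((∀ f : E → ℂ, Measurable f → (∃ C, ∀ x, ‖f x‖ ≤ C) →
        ∀ h k : Lp ℂ 2 μ, ((k : E → ℂ) =ᵐ[μ] fun x => f x * (V h) x) →
          ((V.symm k : E → ℂ) =ᵐ[μ] fun x => f (T x) * h x))
      ↔ (∃ g : E → ℂ, Measurable g ∧ (∃ C, ∀ x, ‖g x‖ ≤ C) ∧
          ∀ h : Lp ℂ 2 μ, (V h : E → ℂ) =ᵐ[μ] fun x => g x * (U h) x))
    ∧ (∀ g : E → ℂ, Measurable g → (∃ C, ∀ x, ‖g x‖ ≤ C) →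
        (∀ h : Lp ℂ 2 μ, (V h : E → ℂ) =ᵐ[μ] fun x => g x * (U h) x) →
        ∀ᵐ x ∂μ, ‖g x‖ = 1) := by
  have h_unimodular : ∀ g : E → ℂ, Measurable g →
      (∀ h : Lp ℂ 2 μ, (V h : E → ℂ) =ᵐ[μ] fun x => g x * (U h) x) → ∀ᵐ x ∂μ, ‖g x‖ = 1 :=
    fun g hg hVg => (U.symm.trans V).toLinearIsometry.ae_norm_eq_one_of_ae_eq_mul
      ENNReal.ofNat_ne_top hg fun k => by simpa using hVg (U.symm k)
  refine ⟨⟨fun hV => ?_, fun ⟨g, hg, _, hVg⟩ f _ _ => ?_⟩, fun g hg _ => h_unimodular g hg⟩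
  · obtain ⟨g, hg, hWg⟩ := (commutesWithBoundedMul_of_symm_ae_eq hT hU hV).exists_ae_eq_mul
      ENNReal.ofNat_ne_top
    have hVg : ∀ h : Lp ℂ 2 μ, (V h : E → ℂ) =ᵐ[μ] fun x => g x * (U h) x := fun h => by
      simpa using hWg (U h)
    obtain ⟨g', hg', hg'_bdd, hg'g⟩ :=
      exists_bounded_measurable_ae_eq hg ((h_unimodular g hg hVg).mono fun x hx => hx.le)
    refine ⟨g', hg', hg'_bdd, fun h => (hVg h).trans ?_⟩
    filter_upwards [hg'g] with x hx
    rw [hx]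
  · have hg_ne : ∀ᵐ x ∂μ, g x ≠ 0 :=
      (h_unimodular g hg hVg).mono fun x hx => norm_ne_zero_iff.1 (hx ▸ one_ne_zero)
    exact symm_ae_eq_comp_mul_of_ae_eq_mul hT hU hg_ne hVg f
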